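/- Readdressing lemma: for any labelled sequent Γ ⊢_G Δ and any two nodes z, x of G, if the nested sequent n(Γ ⊢_G Δ; z) is derivable in N-LBiI, then so is n(Γ ⊢_G Δ; x). -/

import Mathlib

/-- BiInt formulas -/
inductive Form : Type
  | atom : ℕ → Form
  | top  : Form
  | bot  : Form
  | and  : Form → Form → Form
  | or   : Form → Form → Form
  | imp  : Form → Form → Form
  | excl : Form → Form → Form
  deriving DecidableEq

/-- Kripke structures for BiInt -/
structure Kripke where
  W : Type
  le : W → W → Prop
  le_refl : ∀ w, le w w
  le_trans : ∀ u v w, le u v → le v w → le u w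
  nonempty : Nonempty W
  I : W → Set ℕ
  mono : ∀ {w w'}, le w w' → I w ⊆ I w'

/-- truth of a formula at a world -/
def Kripke.force (K : Kripke) : K.W → Form → Prop
  | w, .atom p => p ∈ K.I w
  | _, .top => True
  | _, .bot => False
  | w, .and A B => K.force w A ∧ K.force w B
  | w, .or A B => K.force w A ∨ K.force w B
  | w, .imp A B => ∀ w', K.le w w' → K.force w' A → K.force w' B
  | w, .excl A B => ∃ w', K.le w' w ∧ K.force w' A ∧ ¬ K.force w' B

/-- validity of a sequent -/
def SeqValid (Γ Δ : Multiset Form) : Prop :=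
  ∀ (K : Kripke) (w : K.W), (∀ A ∈ Γ, K.force w A) → ∃ A ∈ Δ, K.force w A

/-- The standard-style sequent calculus LBiI; the boolean parameter tells whether
the cut rule is allowed (`LD false` is cut-free LBiI). -/
inductive LD : Bool → Multiset Form → Multiset Form → Prop
  | hyp (b) (A : Form) (Γ Δ) : LD b (A ::ₘ Γ) (A ::ₘ Δ)
  | cut {Γ Δ} (A : Form) : LD true Γ (A ::ₘ Δ) → LD true (A ::ₘ Γ) Δ → LD true Γ Δ
  | weakL {b Γ Δ} (A : Form) : LD b Γ Δ → LD b (A ::ₘ Γ) Δ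
  | weakR {b Γ Δ} (A : Form) : LD b Γ Δ → LD b Γ (A ::ₘ Δ)
  | contrL {b Γ Δ} {A : Form} : LD b (A ::ₘ A ::ₘ Γ) Δ → LD b (A ::ₘ Γ) Δ
  | contrR {b Γ Δ} {A : Form} : LD b Γ (A ::ₘ A ::ₘ Δ) → LD b Γ (A ::ₘ Δ)
  | topL {b Γ Δ} : LD b Γ Δ → LD b (Form.top ::ₘ Γ) Δ
  | topR (b Γ Δ) : LD b Γ (Form.top ::ₘ Δ)
  | botL (b Γ Δ) : LD b (Form.bot ::ₘ Γ) Δ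
  | botR {b Γ Δ} : LD b Γ Δ → LD b Γ (Form.bot ::ₘ Δ)
  | andL {b Γ Δ A B} : LD b (A ::ₘ B ::ₘ Γ) Δ → LD b (Form.and A B ::ₘ Γ) Δ
  | andR {b Γ Δ A B} : LD b Γ (A ::ₘ Δ) → LD b Γ (B ::ₘ Δ) → LD b Γ (Form.and A B ::ₘ Δ)
  | orL {b Γ Δ A B} : LD b (A ::ₘ Γ) Δ → LD b (B ::ₘ Γ) Δ → LD b (Form.or A B ::ₘ Γ) Δ
  | orR {b Γ Δ A B} : LD b Γ (A ::ₘ B ::ₘ Δ) → LD b Γ (Form.or A B ::ₘ Δ)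
  | impL {b Γ Δ A B} : LD b (Form.imp A B ::ₘ Γ) (A ::ₘ Δ) → LD b (B ::ₘ Γ) Δ →
      LD b (Form.imp A B ::ₘ Γ) Δ
  | impR {b Γ Δ A B} : LD b (A ::ₘ Γ) {B} → LD b Γ (Form.imp A B ::ₘ Δ)
  | exclL {b Γ Δ A B} : LD b {A} (B ::ₘ Δ) → LD b (Form.excl A B ::ₘ Γ) Δ
  | exclR {b Γ Δ A B} : LD b Γ (A ::ₘ Δ) → LD b (B ::ₘ Γ) (Form.excl A B ::ₘ Δ) →
      LD b Γ (Form.excl A B ::ₘ Δ)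

/-- members of nested contexts: formulas or nested sequents -/
inductive NForm : Type
  | fm : Form → NForm
  | seq : List NForm → List NForm → NForm

mutual
  /-- deep equality of nested-context members up to permutation
  (nested contexts are multisets) -/
  inductive NEq : NForm → NForm → Prop
    | fm (A : Form) : NEq (.fm A) (.fm A)
    | seq {Γ Γ' Δ Δ'} : CEq Γ Γ' → CEq Δ Δ' → NEq (.seq Γ Δ) (.seq Γ' Δ')
  /-- equality of nested contexts as multisets -/
  inductive CEq : List NForm → List NForm → Prop
    | nil : CEq [] []
    | cons {a b Γ Γ'} : NEq a b → CEq Γ Γ' → CEq (a :: Γ) (b :: Γ')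
    | swap (a b : NForm) (Γ : List NForm) : CEq (a :: b :: Γ) (b :: a :: Γ)
    | trans {Γ Γ' Γ''} : CEq Γ Γ' → CEq Γ' Γ'' → CEq Γ Γ''
end

/-- The nested sequent calculus N-LBiI; the boolean parameter tells whether
the cut rule is allowed. Nested contexts are lists identified up to `CEq`
(i.e. multisets), so there is an explicit exchange rule. -/
inductive ND : Bool → List NForm → List NForm → Prop
  | exch {b Γ Γ' Δ Δ'} : CEq Γ Γ' → CEq Δ Δ' → ND b Γ Δ → ND b Γ' Δ'
  | hyp (b) (A : Form) (Γ Δ) : ND b (.fm A :: Γ) (.fm A :: Δ)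
  | cut {Γ Δ} (A : Form) : ND true Γ (.fm A :: Δ) → ND true (.fm A :: Γ) Δ → ND true Γ Δ
  | weakL {b Γ Δ} (A : Form) : ND b Γ Δ → ND b (.fm A :: Γ) Δ
  | weakR {b Γ Δ} (A : Form) : ND b Γ Δ → ND b Γ (.fm A :: Δ)
  | contrL {b Γ Δ} {A : Form} : ND b (.fm A :: .fm A :: Γ) Δ → ND b (.fm A :: Γ) Δ
  | contrR {b Γ Δ} {A : Form} : ND b Γ (.fm A :: .fm A :: Δ) → ND b Γ (.fm A :: Δ)
  | topL {b Γ Δ} : ND b Γ Δ → ND b (.fm .top :: Γ) Δ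
  | topR (b Γ Δ) : ND b Γ (.fm .top :: Δ)
  | botL (b Γ Δ) : ND b (.fm .bot :: Γ) Δ
  | botR {b Γ Δ} : ND b Γ Δ → ND b Γ (.fm .bot :: Δ)
  | andL {b Γ Δ A B} : ND b (.fm A :: .fm B :: Γ) Δ → ND b (.fm (.and A B) :: Γ) Δ
  | andR {b Γ Δ A B} : ND b Γ (.fm A :: Δ) → ND b Γ (.fm B :: Δ) → ND b Γ (.fm (.and A B) :: Δ)
  | orL {b Γ Δ A B} : ND b (.fm A :: Γ) Δ → ND b (.fm B :: Γ) Δ → ND b (.fm (.or A B) :: Γ) Δ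
  | orR {b Γ Δ A B} : ND b Γ (.fm A :: .fm B :: Δ) → ND b Γ (.fm (.or A B) :: Δ)
  | impL {b Γ Δ A B} : ND b (.fm (.imp A B) :: Γ) (.fm A :: Δ) → ND b (.fm B :: Γ) Δ →
      ND b (.fm (.imp A B) :: Γ) Δ
  | impR {b Γ Δ A B} : ND b (.fm A :: Γ) [.fm B] → ND b Γ (.fm (.imp A B) :: Δ)
  | exclL {b Γ Δ A B} : ND b [.fm A] (.fm B :: Δ) → ND b (.fm (.excl A B) :: Γ) Δ
  | exclR {b Γ Δ A B} : ND b Γ (.fm A :: Δ) → ND b (.fm B :: Γ) (.fm (.excl A B) :: Δ) →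
      ND b Γ (.fm (.excl A B) :: Δ)
  | nestL {b Γ Δ Γ₀ Δ₀} : ND b Γ₀ (Δ₀ ++ Δ) → ND b (.seq Γ₀ Δ₀ :: Γ) Δ
  | nestR {b Γ Δ Γ₀ Δ₀} : ND b (Γ ++ Γ₀) Δ₀ → ND b Γ (.seq Γ₀ Δ₀ :: Δ)
  | unnestL {b Γ Δ Γ₀ Δ₀} : ND b (.seq Γ₀ Δ₀ :: Γ) Δ → ND b (Γ₀ ++ Γ) (Δ₀ ++ Δ)
  | unnestR {b Γ Δ Γ₀ Δ₀} : ND b Γ (.seq Γ₀ Δ₀ :: Δ) → ND b (Γ₀ ++ Γ) (Δ₀ ++ Δ)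
/-- a finite directed graph with labels (nodes) drawn from ℕ -/
structure LGraph where
  nodes : Finset ℕ
  arcs : Finset (ℕ × ℕ)

/-- renaming of a node in a graph (`G[y/x]`) -/
def LGraph.ren (G : LGraph) (x y : ℕ) : LGraph :=
  ⟨G.nodes.image (fun z => if z = x then y else z),
   G.arcs.image (fun a => ((if a.1 = x then y else a.1), (if a.2 = x then y else a.2)))⟩

/-- labelled contexts: multisets of labelled formulas -/
abbrev LCtx := Multiset (ℕ × Form)

/-- renaming of a label in a labelled context (`Γ[y/x]`) -/
def renC (Γ : LCtx) (x y : ℕ) : LCtx := Γ.map (fun a => ((if a.1 = x then y else a.1), a.2))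

/-- wellformedness of a labelled sequent: all labels are nodes of the graph -/
def Wf (G : LGraph) (Γ Δ : LCtx) : Prop :=
  (∀ a ∈ Γ, a.1 ∈ G.nodes) ∧ (∀ a ∈ Δ, a.1 ∈ G.nodes)

/-- The labelled sequent calculus L-LBiI; the boolean parameter tells whether
the cut rule is allowed. -/
inductive LDeriv : Bool → LGraph → LCtx → LCtx → Prop
  | hyp {G Γ Δ} (b) (x : ℕ) (A : Form) : Wf G Γ Δ → x ∈ G.nodes →
      LDeriv b G ((x, A) ::ₘ Γ) ((x, A) ::ₘ Δ)
  | cut {G Γ Δ} (x : ℕ) (A : Form) : x ∈ G.nodes →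
      LDeriv true G Γ ((x, A) ::ₘ Δ) → LDeriv true G ((x, A) ::ₘ Γ) Δ → LDeriv true G Γ Δ
  | weakL {b G Γ Δ} (x : ℕ) (A : Form) : x ∈ G.nodes → LDeriv b G Γ Δ →
      LDeriv b G ((x, A) ::ₘ Γ) Δ
  | weakR {b G Γ Δ} (x : ℕ) (A : Form) : x ∈ G.nodes → LDeriv b G Γ Δ →
      LDeriv b G Γ ((x, A) ::ₘ Δ)
  | contrL {b G Γ Δ x A} : LDeriv b G ((x, A) ::ₘ (x, A) ::ₘ Γ) Δ → LDeriv b G ((x, A) ::ₘ Γ) Δ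
  | contrR {b G Γ Δ x A} : LDeriv b G Γ ((x, A) ::ₘ (x, A) ::ₘ Δ) → LDeriv b G Γ ((x, A) ::ₘ Δ)
  /-- `nodesplit U`: the conclusion graph is `G₀ ⋈y (y,x) ⋈x G`,
  the premise graph is `G₀ ⋈y G[y/x]`, with proviso `↓G x` -/
  | nodesplitU {b Γ Δ} (G₀ G : LGraph) (x y : ℕ) :
      y ∈ G₀.nodes → x ∈ G.nodes → G₀.nodes ∩ G.nodes = ∅ →
      (∀ z, (z, x) ∉ G.arcs) →
      LDeriv b ⟨G₀.nodes ∪ (G.ren x y).nodes, G₀.arcs ∪ (G.ren x y).arcs⟩ Γ Δ →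
      LDeriv b ⟨G₀.nodes ∪ G.nodes, insert (y, x) (G₀.arcs ∪ G.arcs)⟩ Γ Δ
  /-- `nodesplit D`: the conclusion graph is `G ⋈x (x,y) ⋈y G₀`,
  the premise graph is `G[y/x] ⋈y G₀`, with proviso `↑G x` -/
  | nodesplitD {b Γ Δ} (G G₀ : LGraph) (x y : ℕ) :
      x ∈ G.nodes → y ∈ G₀.nodes → G.nodes ∩ G₀.nodes = ∅ →
      (∀ z, (x, z) ∉ G.arcs) →
      LDeriv b ⟨(G.ren x y).nodes ∪ G₀.nodes, (G.ren x y).arcs ∪ G₀.arcs⟩ Γ Δ →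
      LDeriv b ⟨G.nodes ∪ G₀.nodes, insert (x, y) (G.arcs ∪ G₀.arcs)⟩ Γ Δ
  /-- `nodemerge D`: the premise graph is `G₀ ⋈y (y,x) ⋈x G`,
  the conclusion graph is `G₀[x/y] ⋈x G` and `y` is renamed to `x` in the contexts -/
  | nodemergeD {b Γ Δ} (G₀ G : LGraph) (x y : ℕ) :
      y ∈ G₀.nodes → x ∈ G.nodes → G₀.nodes ∩ G.nodes = ∅ →
      LDeriv b ⟨G₀.nodes ∪ G.nodes, insert (y, x) (G₀.arcs ∪ G.arcs)⟩ Γ Δ →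
      LDeriv b ⟨(G₀.ren y x).nodes ∪ G.nodes, (G₀.ren y x).arcs ∪ G.arcs⟩
        (renC Γ y x) (renC Δ y x)
  /-- `nodemerge U`: the premise graph is `G ⋈x (x,y) ⋈y G₀`,
  the conclusion graph is `G ⋈x G₀[x/y]` and `y` is renamed to `x` in the contexts -/
  | nodemergeU {b Γ Δ} (G G₀ : LGraph) (x y : ℕ) :
      x ∈ G.nodes → y ∈ G₀.nodes → G.nodes ∩ G₀.nodes = ∅ →
      LDeriv b ⟨G.nodes ∪ G₀.nodes, insert (x, y) (G.arcs ∪ G₀.arcs)⟩ Γ Δ →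
      LDeriv b ⟨G.nodes ∪ (G₀.ren y x).nodes, G.arcs ∪ (G₀.ren y x).arcs⟩
        (renC Γ y x) (renC Δ y x)
  | monotL {b G Γ Δ A} (x y : ℕ) : (x, y) ∈ G.arcs →
      LDeriv b G ((x, A) ::ₘ (y, A) ::ₘ Γ) Δ → LDeriv b G ((x, A) ::ₘ Γ) Δ
  | monotR {b G Γ Δ A} (x y : ℕ) : (y, x) ∈ G.arcs →
      LDeriv b G Γ ((y, A) ::ₘ (x, A) ::ₘ Δ) → LDeriv b G Γ ((x, A) ::ₘ Δ)
  | topL {b G Γ Δ x} : x ∈ G.nodes → LDeriv b G Γ Δ → LDeriv b G ((x, Form.top) ::ₘ Γ) Δ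
  | topR {G Γ Δ} (b) (x : ℕ) : Wf G Γ Δ → x ∈ G.nodes → LDeriv b G Γ ((x, Form.top) ::ₘ Δ)
  | botL {G Γ Δ} (b) (x : ℕ) : Wf G Γ Δ → x ∈ G.nodes → LDeriv b G ((x, Form.bot) ::ₘ Γ) Δ
  | botR {b G Γ Δ x} : x ∈ G.nodes → LDeriv b G Γ Δ → LDeriv b G Γ ((x, Form.bot) ::ₘ Δ)
  | andL {b G Γ Δ x A B} : LDeriv b G ((x, A) ::ₘ (x, B) ::ₘ Γ) Δ →
      LDeriv b G ((x, Form.and A B) ::ₘ Γ) Δ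
  | andR {b G Γ Δ x A B} : LDeriv b G Γ ((x, A) ::ₘ Δ) → LDeriv b G Γ ((x, B) ::ₘ Δ) →
      LDeriv b G Γ ((x, Form.and A B) ::ₘ Δ)
  | orL {b G Γ Δ x A B} : LDeriv b G ((x, A) ::ₘ Γ) Δ → LDeriv b G ((x, B) ::ₘ Γ) Δ →
      LDeriv b G ((x, Form.or A B) ::ₘ Γ) Δ
  | orR {b G Γ Δ x A B} : LDeriv b G Γ ((x, A) ::ₘ (x, B) ::ₘ Δ) →
      LDeriv b G Γ ((x, Form.or A B) ::ₘ Δ)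
  | impL {b G Γ Δ x A B} : LDeriv b G ((x, Form.imp A B) ::ₘ Γ) ((x, A) ::ₘ Δ) →
      LDeriv b G ((x, B) ::ₘ Γ) Δ → LDeriv b G ((x, Form.imp A B) ::ₘ Γ) Δ
  /-- `⊃R`: the premise graph is `G ⋈x (x,y)` with `y` fresh -/
  | impR {b G Γ Δ A B} (x y : ℕ) : x ∈ G.nodes → y ∉ G.nodes →
      LDeriv b ⟨insert y G.nodes, insert (x, y) G.arcs⟩ ((y, A) ::ₘ Γ) ((y, B) ::ₘ Δ) →
      LDeriv b G Γ ((x, Form.imp A B) ::ₘ Δ)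
  /-- `⤙L`: the premise graph is `(y,x) ⋈x G` with `y` fresh -/
  | exclL {b G Γ Δ A B} (x y : ℕ) : x ∈ G.nodes → y ∉ G.nodes →
      LDeriv b ⟨insert y G.nodes, insert (y, x) G.arcs⟩ ((y, A) ::ₘ Γ) ((y, B) ::ₘ Δ) →
      LDeriv b G ((x, Form.excl A B) ::ₘ Γ) Δ
  | exclR {b G Γ Δ x A B} : LDeriv b G Γ ((x, A) ::ₘ Δ) →
      LDeriv b G ((x, B) ::ₘ Γ) ((x, Form.excl A B) ::ₘ Δ) →
      LDeriv b G Γ ((x, Form.excl A B) ::ₘ Δ)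
/-- adjacency: the symmetric closure of the arc relation -/
def LGraph.Adj (G : LGraph) (a b : ℕ) : Prop := (a, b) ∈ G.arcs ∨ (b, a) ∈ G.arcs

/-- `l` is a (simple, undirected) path from `x` to `y` in `G` -/
def IsPath (G : LGraph) (x y : ℕ) (l : List ℕ) : Prop :=
  l.Chain' G.Adj ∧ l.head? = some x ∧ l.getLast? = some y ∧ l.Nodup ∧ ∀ z ∈ l, z ∈ G.nodes

/-- `G` is a label tree: finite, nonempty and any two nodes are connected
by a unique path of forward and backward arcs -/
structure IsTree (G : LGraph) : Prop where
  nonempty : G.nodes.Nonempty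
  arcs_mem : ∀ a ∈ G.arcs, a.1 ∈ G.nodes ∧ a.2 ∈ G.nodes
  no_loop : ∀ x, (x, x) ∉ G.arcs
  no_double : ∀ x y, (x, y) ∈ G.arcs → (y, x) ∉ G.arcs
  unique_path : ∀ x ∈ G.nodes, ∀ y ∈ G.nodes, ∃! l : List ℕ, IsPath G x y l

/-- reachability in `G` avoiding the node `x` -/
def LGraph.ReachAvoiding (G : LGraph) (x : ℕ) : ℕ → ℕ → Prop :=
  Relation.ReflTransGen (fun a b => G.Adj a b ∧ a ≠ x ∧ b ≠ x)

/-- the nodes of the component of `y` in `G` after removing the node `x` -/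
noncomputable def LGraph.comp (G : LGraph) (x y : ℕ) : Finset ℕ :=
  letI : DecidablePred (G.ReachAvoiding x y) := Classical.decPred _
  (G.nodes.erase x).filter (G.ReachAvoiding x y)

/-- the subgraph induced by a set of nodes -/
def LGraph.induce (G : LGraph) (s : Finset ℕ) : LGraph :=
  ⟨s, G.arcs.filter (fun a => a.1 ∈ s ∧ a.2 ∈ s)⟩

lemma LGraph.comp_subset (G : LGraph) (x y : ℕ) : G.comp x y ⊆ G.nodes.erase x := by
  intro z hz
  unfold LGraph.comp at hz
  letI : DecidablePred (G.ReachAvoiding x y) := Classical.decPred _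
  exact Finset.mem_of_mem_filter z hz

lemma LGraph.comp_card_lt (G : LGraph) {x : ℕ} (hx : x ∈ G.nodes) (y : ℕ) :
    (G.comp x y).card < G.nodes.card :=
  lt_of_le_of_lt (Finset.card_le_card (G.comp_subset x y)) (Finset.card_erase_lt_of_mem hx)

/-- the translation `n(Γ ⊢_G Δ ; x)` of a labelled sequent into a nested sequent,
given as the pair (antecedent, succedent) of nested contexts: formulas labelled `x`
stay at top level, and each neighbouring component gives rise to a nested sequent
member, in the antecedent for in-neighbours and in the succedent for out-neighbours -/
noncomputable def ntr (G : LGraph) (Γ Δ : LCtx) (x : ℕ) : List NForm × List NForm :=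
  if hx : x ∈ G.nodes then
    let ants : List NForm := (Γ.filter (fun a => a.1 = x)).toList.map (fun a => NForm.fm a.2)
    let sucs : List NForm := (Δ.filter (fun a => a.1 = x)).toList.map (fun a => NForm.fm a.2)
    let nestedIn : List NForm :=
      (G.arcs.filter (fun a => a.2 = x)).toList.attach.map (fun a =>
        let s := G.comp x a.1.1
        let r := ntr (G.induce s) (Γ.filter (fun p => p.1 ∈ s)) (Δ.filter (fun p => p.1 ∈ s)) a.1.1
        NForm.seq r.1 r.2)
    let nestedOut : List NForm :=
      (G.arcs.filter (fun a => a.1 = x)).toList.attach.map (fun a =>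
        let s := G.comp x a.1.2
        let r := ntr (G.induce s) (Γ.filter (fun p => p.1 ∈ s)) (Δ.filter (fun p => p.1 ∈ s)) a.1.2
        NForm.seq r.1 r.2)
    (ants ++ nestedIn, sucs ++ nestedOut)
  else ([], [])
termination_by G.nodes.card
decreasing_by
  all_goals
    simpa [LGraph.induce] using G.comp_card_lt hx _



namespace Aux
open List

mutual
theorem neq_refl : ∀ N : NForm, NEq N N
  | .fm A => .fm A
  | .seq Γ Δ => .seq (ceq_refl Γ) (ceq_refl Δ)
theorem ceq_refl : ∀ L : List NForm, CEq L L
  | [] => .nil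
  | a :: L => .cons (neq_refl a) (ceq_refl L)
end

theorem neq_symm {a b : NForm} (h : NEq a b) : NEq b a := by
  induction h using NEq.rec (motive_2 := fun Γ Δ _ => CEq Δ Γ) with
  | fm A => exact .fm A
  | seq _ _ ih1 ih2 => exact .seq ih1 ih2
  | nil => exact .nil
  | cons _ _ ih1 ih2 => exact .cons ih1 ih2
  | swap a b Γ => exact .swap b a Γ
  | trans _ _ ih1 ih2 => exact .trans ih2 ih1

theorem ceq_symm {Γ Δ : List NForm} (h : CEq Γ Δ) : CEq Δ Γ := by
  induction h using CEq.rec (motive_1 := fun a b _ => NEq b a) with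
  | fm A => exact .fm A
  | seq _ _ ih1 ih2 => exact .seq ih1 ih2
  | nil => exact .nil
  | cons _ _ ih1 ih2 => exact .cons ih1 ih2
  | swap a b Γ => exact .swap b a Γ
  | trans _ _ ih1 ih2 => exact .trans ih2 ih1

theorem neq_trans {a b c : NForm} (h1 : NEq a b) (h2 : NEq b c) : NEq a c := by
  cases h1 with
  | fm A => exact h2
  | seq g1 g2 =>
    cases h2 with
    | seq g3 g4 => exact .seq (.trans g1 g3) (.trans g2 g4)

instance nsetoid : Setoid NForm := ⟨NEq, neq_refl, neq_symm, neq_trans⟩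

def mk (N : NForm) : Quotient nsetoid := Quotient.mk _ N

theorem mk_eq {a b : NForm} (h : NEq a b) : mk a = mk b := Quotient.sound h

theorem neq_of_mk {a b : NForm} (h : mk a = mk b) : NEq a b := Quotient.exact h

theorem perm_of_ceq {Γ Δ : List NForm} (h : CEq Γ Δ) : (Γ.map mk).Perm (Δ.map mk) := by
  induction h using CEq.rec (motive_1 := fun a b _ => True) with
  | fm A => trivial
  | seq _ _ _ _ => trivial
  | nil => exact .nil
  | @cons a b Γ Γ' h1 _ _ ih2 =>
    simp only [List.map_cons]
    rw [mk_eq h1]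
    exact ih2.cons _
  | swap a b Γ => exact List.Perm.swap (mk b) (mk a) _
  | trans _ _ ih1 ih2 => exact ih1.trans ih2

theorem ceq_middle : ∀ (L₁ : List NForm) (a : NForm) (L₂ : List NForm),
    CEq (a :: (L₁ ++ L₂)) (L₁ ++ a :: L₂)
  | [], a, L₂ => ceq_refl _
  | b :: L₁, a, L₂ => .trans (.swap a b _) (.cons (neq_refl b) (ceq_middle L₁ a L₂))

theorem ceq_of_perm : ∀ {Γ Δ : List NForm}, (Γ.map mk).Perm (Δ.map mk) → CEq Γ Δ := by
  intro Γ
  induction Γ with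
  | nil =>
    intro Δ h
    have : Δ.map mk = [] := h.symm.eq_nil
    cases Δ with
    | nil => exact .nil
    | cons b Δ => simp at this
  | cons a Γ ih =>
    intro Δ h
    have hmem : mk a ∈ Δ.map mk := h.mem_iff.mp (by simp)
    obtain ⟨b, hbΔ, hba⟩ := List.mem_map.mp hmem
    obtain ⟨Δ₁, Δ₂, rfl⟩ := List.append_of_mem hbΔ
    have h2 : (mk a :: Γ.map mk).Perm (Δ₁.map mk ++ mk b :: Δ₂.map mk) := by simpa using h
    have h3 := h2.trans List.perm_middle
    rw [hba] at h3
    have hperm : (Γ.map mk).Perm ((Δ₁ ++ Δ₂).map mk) := by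
      simpa using h3.cons_inv
    have hne : NEq a b := neq_of_mk hba.symm
    exact .trans (.cons hne (ih hperm)) (ceq_middle Δ₁ b Δ₂)

theorem ceq_of_listperm {Γ Δ : List NForm} (h : Γ.Perm Δ) : CEq Γ Δ :=
  ceq_of_perm (h.map mk)

end Aux
namespace Aux

theorem nd_perm {b} {Γ Γ' Δ Δ' : List NForm} (hΓ : Γ.Perm Γ') (hΔ : Δ.Perm Δ')
    (h : ND b Γ Δ) : ND b Γ' Δ' :=
  .exch (ceq_of_listperm hΓ) (ceq_of_listperm hΔ) h

theorem nd_permL {b} {Γ Γ' Δ : List NForm} (hΓ : Γ.Perm Γ') (h : ND b Γ Δ) : ND b Γ' Δ :=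
  nd_perm hΓ (List.Perm.refl _) h

theorem nd_permR {b} {Γ Δ Δ' : List NForm} (hΔ : Δ.Perm Δ') (h : ND b Γ Δ) : ND b Γ Δ' :=
  nd_perm (List.Perm.refl _) hΔ h

theorem pswap (a b : NForm) (l : List NForm) : (a :: b :: l).Perm (b :: a :: l) :=
  List.Perm.swap b a l

theorem weakNL {b} {Γ Δ : List NForm} (N : NForm) (h : ND b Γ Δ) : ND b (N :: Γ) Δ := by
  induction h generalizing N with
  | exch h1 h2 _ ih => exact .exch (.cons (neq_refl N) h1) h2 (ih N)
  | hyp b A Γ Δ => exact nd_permL (pswap _ _ _) (.hyp b A (N :: Γ) Δ)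
  | cut A h1 h2 ih1 ih2 => exact .cut A (ih1 N) (nd_permL (pswap _ _ _) (ih2 N))
  | weakL A _ ih => exact nd_permL (pswap _ _ _) (.weakL A (ih N))
  | weakR A _ ih => exact .weakR A (ih N)
  | contrL _ ih =>
    exact nd_permL (pswap _ _ _) (.contrL (nd_permL ((pswap _ _ _).trans ((pswap _ _ _).cons _)) (ih N)))
  | contrR _ ih => exact .contrR (ih N)
  | topL _ ih => exact nd_permL (pswap _ _ _) (.topL (ih N))
  | topR b Γ Δ => exact .topR b (N :: Γ) Δ
  | botL b Γ Δ => exact nd_permL (pswap _ _ _) (.botL b (N :: Γ) Δ)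
  | botR _ ih => exact .botR (ih N)
  | andL _ ih =>
    exact nd_permL (pswap _ _ _) (.andL (nd_permL ((pswap _ _ _).trans ((pswap _ _ _).cons _)) (ih N)))
  | andR _ _ ih1 ih2 => exact .andR (ih1 N) (ih2 N)
  | orL _ _ ih1 ih2 =>
    exact nd_permL (pswap _ _ _) (.orL (nd_permL (pswap _ _ _) (ih1 N)) (nd_permL (pswap _ _ _) (ih2 N)))
  | orR _ ih => exact .orR (ih N)
  | impL _ _ ih1 ih2 =>
    exact nd_permL (pswap _ _ _) (.impL (nd_permL (pswap _ _ _) (ih1 N)) (nd_permL (pswap _ _ _) (ih2 N)))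
  | impR _ ih => exact .impR (nd_permL (pswap _ _ _) (ih N))
  | exclL h _ => exact nd_permL (pswap _ _ _) (.exclL h)
  | exclR _ _ ih1 ih2 => exact .exclR (ih1 N) (nd_permL (pswap _ _ _) (ih2 N))
  | nestL h _ => exact nd_permL (pswap _ _ _) (.nestL h)
  | nestR _ ih => exact .nestR (ih N)
  | unnestL _ ih => exact nd_permL List.perm_middle (.unnestL (nd_permL (pswap _ _ _) (ih N)))
  | unnestR _ ih => exact nd_permL List.perm_middle (.unnestR (ih N))

theorem weakNR {b} {Γ Δ : List NForm} (N : NForm) (h : ND b Γ Δ) : ND b Γ (N :: Δ) := by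
  induction h generalizing N with
  | exch h1 h2 _ ih => exact .exch h1 (.cons (neq_refl N) h2) (ih N)
  | hyp b A Γ Δ => exact nd_permR (pswap _ _ _) (.hyp b A Γ (N :: Δ))
  | cut A h1 h2 ih1 ih2 => exact .cut A (nd_permR (pswap _ _ _) (ih1 N)) (ih2 N)
  | weakL A _ ih => exact .weakL A (ih N)
  | weakR A _ ih => exact nd_permR (pswap _ _ _) (.weakR A (ih N))
  | contrL _ ih => exact .contrL (ih N)
  | contrR _ ih =>
    exact nd_permR (pswap _ _ _) (.contrR (nd_permR ((pswap _ _ _).trans ((pswap _ _ _).cons _)) (ih N)))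
  | topL _ ih => exact .topL (ih N)
  | topR b Γ Δ => exact nd_permR (pswap _ _ _) (.topR b Γ (N :: Δ))
  | botL b Γ Δ => exact .botL b Γ (N :: Δ)
  | botR _ ih => exact nd_permR (pswap _ _ _) (.botR (ih N))
  | andL _ ih => exact .andL (ih N)
  | andR _ _ ih1 ih2 =>
    exact nd_permR (pswap _ _ _) (.andR (nd_permR (pswap _ _ _) (ih1 N)) (nd_permR (pswap _ _ _) (ih2 N)))
  | orL _ _ ih1 ih2 => exact .orL (ih1 N) (ih2 N)
  | orR _ ih =>
    exact nd_permR (pswap _ _ _) (.orR (nd_permR ((pswap _ _ _).trans ((pswap _ _ _).cons _)) (ih N)))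
  | impL _ _ ih1 ih2 => exact .impL (nd_permR (pswap _ _ _) (ih1 N)) (ih2 N)
  | impR h _ => exact nd_permR (pswap _ _ _) (.impR h)
  | exclL _ ih => exact .exclL (nd_permR (pswap _ _ _) (ih N))
  | exclR _ _ ih1 ih2 =>
    exact nd_permR (pswap _ _ _) (.exclR (nd_permR (pswap _ _ _) (ih1 N)) (nd_permR (pswap _ _ _) (ih2 N)))
  | nestL _ ih => exact .nestL (nd_permR List.perm_middle.symm (ih N))
  | nestR h _ => exact nd_permR (pswap _ _ _) (.nestR h)
  | unnestL _ ih => exact nd_permR List.perm_middle (.unnestL (ih N))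
  | unnestR _ ih => exact nd_permR List.perm_middle (.unnestR (nd_permR (pswap _ _ _) (ih N)))

theorem weakNLs {b} {Γ Δ : List NForm} (Ξ : List NForm) (h : ND b Γ Δ) : ND b (Ξ ++ Γ) Δ := by
  induction Ξ with
  | nil => exact h
  | cons N Ξ ih => exact weakNL N ih

theorem weakNRs {b} {Γ Δ : List NForm} (Θ : List NForm) (h : ND b Γ Δ) : ND b Γ (Θ ++ Δ) := by
  induction Θ with
  | nil => exact h
  | cons N Ξ ih => exact weakNR N ih

end Aux
namespace Aux

mutual
def fmA : NForm → Form
  | .fm A => A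
  | .seq Γ Δ => .excl (conjC Γ) (disjC Δ)
def fmS : NForm → Form
  | .fm A => A
  | .seq Γ Δ => .imp (conjC Γ) (disjC Δ)
def conjC : List NForm → Form
  | [] => .top
  | N :: Γ => .and (fmA N) (conjC Γ)
def disjC : List NForm → Form
  | [] => .bot
  | N :: Δ => .or (fmS N) (disjC Δ)
end

mutual
theorem idA : ∀ (N : NForm) (b : Bool) (Ξ Θ : List NForm), ND b (N :: Ξ) (.fm (fmA N) :: Θ)
  | .fm A, b, Ξ, Θ => .hyp b A Ξ Θ
  | .seq Γ₀ Δ₀, b, Ξ, Θ => by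
    show ND b _ (.fm (.excl (conjC Γ₀) (disjC Δ₀)) :: Θ)
    apply ND.nestL
    apply nd_permR List.perm_middle.symm
    apply ND.exclR
    · exact nd_permL (by simp) (conjR Γ₀ b [] (Δ₀ ++ Θ))
    · exact weakNR _ (disjL Δ₀ b Γ₀ Θ)
theorem idS : ∀ (N : NForm) (b : Bool) (Ξ Θ : List NForm), ND b (.fm (fmS N) :: Ξ) (N :: Θ)
  | .fm A, b, Ξ, Θ => .hyp b A Ξ Θ
  | .seq Γ₀ Δ₀, b, Ξ, Θ => by
    show ND b (.fm (.imp (conjC Γ₀) (disjC Δ₀)) :: Ξ) _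
    apply ND.nestR
    show ND b (.fm (.imp (conjC Γ₀) (disjC Δ₀)) :: (Ξ ++ Γ₀)) Δ₀
    apply ND.impL
    · exact nd_permL (List.perm_middle.trans ((List.perm_append_comm).cons _))
        (conjR Γ₀ b (.fm (.imp (conjC Γ₀) (disjC Δ₀)) :: Ξ) Δ₀)
    · exact nd_permR (by simp) (disjL Δ₀ b (Ξ ++ Γ₀) [])
theorem conjR : ∀ (Γ : List NForm) (b : Bool) (Ξ Θ : List NForm),
    ND b (Γ ++ Ξ) (.fm (conjC Γ) :: Θ)
  | [], b, Ξ, Θ => .topR b Ξ Θ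
  | N :: Γ, b, Ξ, Θ => .andR (idA N b (Γ ++ Ξ) Θ) (weakNL N (conjR Γ b Ξ Θ))
theorem disjL : ∀ (Δ : List NForm) (b : Bool) (Ξ Θ : List NForm),
    ND b (.fm (disjC Δ) :: Ξ) (Δ ++ Θ)
  | [], b, Ξ, Θ => .botL b Ξ Θ
  | N :: Δ, b, Ξ, Θ => .orL (idS N b Ξ (Δ ++ Θ)) (weakNR N (disjL Δ b Ξ Θ))
end

end Aux
namespace Aux

def flatL (Γ : List NForm) : List NForm := Γ.map (fun N => .fm (fmA N))
def flatR (Δ : List NForm) : List NForm := Δ.map (fun N => .fm (fmS N))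

@[simp] theorem flatL_nil : flatL [] = [] := rfl
@[simp] theorem flatL_cons (N Γ) : flatL (N :: Γ) = .fm (fmA N) :: flatL Γ := rfl
@[simp] theorem flatL_append (Γ Γ') : flatL (Γ ++ Γ') = flatL Γ ++ flatL Γ' := List.map_append
@[simp] theorem flatR_nil : flatR [] = [] := rfl
@[simp] theorem flatR_cons (N Δ) : flatR (N :: Δ) = .fm (fmS N) :: flatR Δ := rfl
@[simp] theorem flatR_append (Δ Δ') : flatR (Δ ++ Δ') = flatR Δ ++ flatR Δ' := List.map_append

theorem conjC_flatL : ∀ Γ, conjC (flatL Γ) = conjC Γ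
  | [] => rfl
  | N :: Γ => by
    simp only [flatL_cons, conjC]
    rw [conjC_flatL Γ]
    rfl

theorem disjC_flatR : ∀ Δ, disjC (flatR Δ) = disjC Δ
  | [] => rfl
  | N :: Δ => by
    simp only [flatR_cons, disjC]
    rw [disjC_flatR Δ]
    rfl

theorem perm_cons_append (a : NForm) (l : List NForm) : (a :: l).Perm (l ++ [a]) := by
  simpa using (List.perm_middle (a := a) (l₁ := l) (l₂ := ([] : List NForm))).symm

/-- build a conjunction from the flat formulas -/
theorem conjRflat (Γ : List NForm) (b : Bool) (Ξ Θ : List NForm) :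
    ND b (flatL Γ ++ Ξ) (.fm (conjC Γ) :: Θ) := by
  have := conjR (flatL Γ) b Ξ Θ
  rwa [conjC_flatL] at this

/-- eliminate a disjunction into the flat formulas -/
theorem disjLflat (Δ : List NForm) (b : Bool) (Ξ Θ : List NForm) :
    ND b (.fm (disjC Δ) :: Ξ) (flatR Δ ++ Θ) := by
  have := disjL (flatR Δ) b Ξ Θ
  rwa [disjC_flatR] at this

/-- condense flat formulas on the left into a conjunction -/
theorem conjL_fm {b : Bool} : ∀ (Γ : List NForm) {Ξ Θ : List NForm},
    ND b (flatL Γ ++ Ξ) Θ → ND b (.fm (conjC Γ) :: Ξ) Θ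
  | [], Ξ, Θ, h => ND.topL h
  | N :: Γ, Ξ, Θ, h => by
    show ND b (.fm (.and (fmA N) (conjC Γ)) :: Ξ) Θ
    apply ND.andL
    have h1 : ND b (flatL Γ ++ (.fm (fmA N) :: Ξ)) Θ :=
      nd_permL (List.perm_middle.symm) h
    exact nd_permL (pswap _ _ _) (conjL_fm Γ h1)

/-- condense flat formulas on the right into a disjunction -/
theorem disjR_fm {b : Bool} : ∀ (Δ : List NForm) {Ξ Θ : List NForm},
    ND b Ξ (flatR Δ ++ Θ) → ND b Ξ (.fm (disjC Δ) :: Θ)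
  | [], Ξ, Θ, h => ND.botR h
  | N :: Δ, Ξ, Θ, h => by
    show ND b Ξ (.fm (.or (fmS N) (disjC Δ)) :: Θ)
    apply ND.orR
    have h1 : ND b Ξ (flatR Δ ++ (.fm (fmS N) :: Θ)) :=
      nd_permR (List.perm_middle.symm) h
    exact nd_permR (pswap _ _ _) (disjR_fm Δ h1)

end Aux
namespace Aux

theorem seq_comp {A B C : Form}
    (h1 : ∀ Ξ Θ, ND true (.fm A :: Ξ) (.fm B :: Θ))
    (h2 : ∀ Ξ Θ, ND true (.fm B :: Ξ) (.fm C :: Θ)) :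
    ∀ Ξ Θ, ND true (.fm A :: Ξ) (.fm C :: Θ) :=
  fun Ξ Θ => .cut B (h1 Ξ (.fm C :: Θ)) (h2 (.fm A :: Ξ) Θ)

theorem and_mono {A B A' B' : Form}
    (h1 : ∀ Ξ Θ, ND true (.fm A :: Ξ) (.fm A' :: Θ))
    (h2 : ∀ Ξ Θ, ND true (.fm B :: Ξ) (.fm B' :: Θ)) :
    ∀ Ξ Θ, ND true (.fm (.and A B) :: Ξ) (.fm (.and A' B') :: Θ) := by
  intro Ξ Θ
  apply ND.andL
  exact ND.andR (h1 (.fm B :: Ξ) Θ) (nd_permL (pswap _ _ _) (h2 (.fm A :: Ξ) Θ))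

theorem or_mono {A B A' B' : Form}
    (h1 : ∀ Ξ Θ, ND true (.fm A :: Ξ) (.fm A' :: Θ))
    (h2 : ∀ Ξ Θ, ND true (.fm B :: Ξ) (.fm B' :: Θ)) :
    ∀ Ξ Θ, ND true (.fm (.or A B) :: Ξ) (.fm (.or A' B') :: Θ) := by
  intro Ξ Θ
  apply ND.orL
  · exact ND.orR (h1 Ξ (.fm B' :: Θ))
  · exact ND.orR (nd_permR (pswap _ _ _) (h2 Ξ (.fm A' :: Θ)))

theorem imp_mono {C D C' D' : Form}
    (hC : ∀ Ξ Θ, ND true (.fm C' :: Ξ) (.fm C :: Θ))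
    (hD : ∀ Ξ Θ, ND true (.fm D :: Ξ) (.fm D' :: Θ)) :
    ∀ Ξ Θ, ND true (.fm (.imp C D) :: Ξ) (.fm (.imp C' D') :: Θ) := by
  intro Ξ Θ
  apply ND.impR
  apply nd_permL (pswap _ _ _)
  apply ND.impL
  · exact nd_permL (pswap _ _ _) (hC (.fm (.imp C D) :: Ξ) ([.fm D']))
  · exact hD (.fm C' :: Ξ) []

theorem excl_mono {C D C' D' : Form}
    (hC : ∀ Ξ Θ, ND true (.fm C :: Ξ) (.fm C' :: Θ))
    (hD : ∀ Ξ Θ, ND true (.fm D' :: Ξ) (.fm D :: Θ)) :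
    ∀ Ξ Θ, ND true (.fm (.excl C D) :: Ξ) (.fm (.excl C' D') :: Θ) := by
  intro Ξ Θ
  apply ND.exclL
  apply nd_permR (pswap _ _ _)
  apply ND.exclR
  · exact hC [] (.fm D :: Θ)
  · exact nd_permR (pswap _ _ _) (hD [.fm C] (.fm (.excl C' D') :: Θ))

theorem and_swap {A B X : Form} :
    ∀ Ξ Θ, ND true (.fm (.and A (.and B X)) :: Ξ) (.fm (.and B (.and A X)) :: Θ) := by
  intro Ξ Θ
  apply ND.andL
  apply nd_permL (pswap _ _ _)
  apply ND.andL
  apply ND.andR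
  · exact ND.hyp _ _ _ _
  · apply ND.andR
    · exact nd_permL ((pswap (.fm A) (.fm B) (.fm X :: Ξ)).trans
        ((pswap (.fm A) (.fm X) Ξ).cons (.fm B))) (ND.hyp _ _ _ _)
    · exact nd_permL (pswap (.fm X) (.fm B) (.fm A :: Ξ)) (ND.hyp _ _ _ _)

theorem or_swap {A B X : Form} :
    ∀ Ξ Θ, ND true (.fm (.or A (.or B X)) :: Ξ) (.fm (.or B (.or A X)) :: Θ) := by
  intro Ξ Θ
  apply ND.orL
  · apply ND.orR
    apply nd_permR (pswap _ _ _)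
    apply ND.orR
    exact ND.hyp _ _ _ _
  · apply ND.orL
    · exact ND.orR (ND.hyp _ _ _ _)
    · apply ND.orR
      apply nd_permR (pswap _ _ _)
      apply ND.orR
      exact nd_permR (pswap _ _ _) (ND.hyp _ _ _ _)

theorem equiv_main {Γ Γ' : List NForm} (h : CEq Γ Γ') :
    (∀ Ξ Θ, ND true (.fm (conjC Γ) :: Ξ) (.fm (conjC Γ') :: Θ)) ∧
    (∀ Ξ Θ, ND true (.fm (disjC Γ) :: Ξ) (.fm (disjC Γ') :: Θ)) ∧
    (∀ Ξ Θ, ND true (.fm (conjC Γ') :: Ξ) (.fm (conjC Γ) :: Θ)) ∧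
    (∀ Ξ Θ, ND true (.fm (disjC Γ') :: Ξ) (.fm (disjC Γ) :: Θ)) := by
  induction h using CEq.rec (motive_1 := fun M M' _ =>
    (∀ Ξ Θ, ND true (.fm (fmA M) :: Ξ) (.fm (fmA M') :: Θ)) ∧
    (∀ Ξ Θ, ND true (.fm (fmS M) :: Ξ) (.fm (fmS M') :: Θ)) ∧
    (∀ Ξ Θ, ND true (.fm (fmA M') :: Ξ) (.fm (fmA M) :: Θ)) ∧
    (∀ Ξ Θ, ND true (.fm (fmS M') :: Ξ) (.fm (fmS M) :: Θ))) with
  | fm A =>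
    exact ⟨fun Ξ Θ => ND.hyp _ _ _ _, fun Ξ Θ => ND.hyp _ _ _ _,
      fun Ξ Θ => ND.hyp _ _ _ _, fun Ξ Θ => ND.hyp _ _ _ _⟩
  | seq h1 h2 ih1 ih2 =>
    obtain ⟨c1, d1, c1', d1'⟩ := ih1
    obtain ⟨c2, d2, c2', d2'⟩ := ih2
    exact ⟨excl_mono c1 d2', imp_mono c1' d2, excl_mono c1' d2, imp_mono c1 d2'⟩
  | nil =>
    exact ⟨fun Ξ Θ => ND.hyp _ _ _ _, fun Ξ Θ => ND.hyp _ _ _ _,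
      fun Ξ Θ => ND.hyp _ _ _ _, fun Ξ Θ => ND.hyp _ _ _ _⟩
  | cons h1 h2 ih1 ih2 =>
    obtain ⟨e1, e2, e1', e2'⟩ := ih1
    obtain ⟨c1, d1, c1', d1'⟩ := ih2
    exact ⟨and_mono e1 c1, or_mono e2 d1, and_mono e1' c1', or_mono e2' d1'⟩
  | swap a b Γ =>
    exact ⟨and_swap, or_swap, and_swap, or_swap⟩
  | trans h1 h2 ih1 ih2 =>
    obtain ⟨c1, d1, c1', d1'⟩ := ih1
    obtain ⟨c2, d2, c2', d2'⟩ := ih2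
    exact ⟨seq_comp c1 c2, seq_comp d1 d2, seq_comp c2' c1', seq_comp d2' d1'⟩

theorem conj_equiv {Γ Γ'} (h : CEq Γ Γ') :
    ∀ Ξ Θ, ND true (.fm (conjC Γ) :: Ξ) (.fm (conjC Γ') :: Θ) := (equiv_main h).1

theorem disj_equiv {Γ Γ'} (h : CEq Γ Γ') :
    ∀ Ξ Θ, ND true (.fm (disjC Γ) :: Ξ) (.fm (disjC Γ') :: Θ) := (equiv_main h).2.1

theorem flat_exchL {Γ Γ'} (h : CEq Γ Γ') {Ξ Θ} (d : ND true (flatL Γ ++ Ξ) Θ) :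
    ND true (flatL Γ' ++ Ξ) Θ := by
  have d1 : ND true (.fm (conjC Γ) :: Ξ) Θ := conjL_fm Γ d
  refine ND.cut (conjC Γ) ?_ ?_
  · exact ND.cut (conjC Γ') (conjRflat Γ' true Ξ (.fm (conjC Γ) :: Θ))
      (conj_equiv (ceq_symm h) (flatL Γ' ++ Ξ) Θ)
  · exact nd_permL List.perm_middle (weakNLs (flatL Γ') d1)

theorem flat_exchR {Δ Δ'} (h : CEq Δ Δ') {Ξ Θ} (d : ND true Ξ (flatR Δ ++ Θ)) :
    ND true Ξ (flatR Δ' ++ Θ) := by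
  have d1 : ND true Ξ (.fm (disjC Δ) :: Θ) := disjR_fm Δ d
  refine ND.cut (disjC Δ) ?_ ?_
  · exact nd_permR List.perm_middle (weakNRs (flatR Δ') d1)
  · exact ND.cut (disjC Δ') (disj_equiv h Ξ (flatR Δ' ++ Θ))
      (disjLflat Δ' true (.fm (disjC Δ) :: Ξ) Θ)
end Aux
namespace Aux

@[simp] theorem fmA_fm (A : Form) : fmA (.fm A) = A := by simp [fmA]
@[simp] theorem fmS_fm (A : Form) : fmS (.fm A) = A := by simp [fmS]
@[simp] theorem fmA_seq (Γ Δ : List NForm) : fmA (.seq Γ Δ) = .excl (conjC Γ) (disjC Δ) := by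
  simp [fmA]
@[simp] theorem fmS_seq (Γ Δ : List NForm) : fmS (.seq Γ Δ) = .imp (conjC Γ) (disjC Δ) := by
  simp [fmS]

theorem flat {b} {Γ Δ : List NForm} (h : ND b Γ Δ) : ND true (flatL Γ) (flatR Δ) := by
  induction h with
  | @exch b Γ Γ' Δ Δ' h1 h2 _ ih =>
    have t1 : ND true (flatL Γ' ++ []) (flatR Δ) := flat_exchL h1 (nd_permL (by simp) ih)
    have t2 : ND true (flatL Γ' ++ []) (flatR Δ' ++ []) := flat_exchR h2 (nd_permR (by simp) t1)
    exact nd_perm (by simp) (by simp) t2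
  | hyp b A Γ Δ => simp only [flatL_cons, flatR_cons, fmA_fm, fmS_fm]; exact .hyp _ _ _ _
  | cut A _ _ ih1 ih2 =>
    simp only [flatL_cons, flatR_cons, fmA_fm, fmS_fm] at ih1 ih2
    exact .cut A ih1 ih2
  | weakL A _ ih => simp only [flatL_cons, fmA_fm]; exact .weakL A ih
  | weakR A _ ih => simp only [flatR_cons, fmS_fm]; exact .weakR A ih
  | contrL _ ih =>
    simp only [flatL_cons, fmA_fm] at ih ⊢; exact .contrL ih
  | contrR _ ih =>
    simp only [flatR_cons, fmS_fm] at ih ⊢; exact .contrR ih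
  | topL _ ih => simp only [flatL_cons, fmA_fm]; exact .topL ih
  | topR b Γ Δ => simp only [flatR_cons, fmS_fm]; exact .topR _ _ _
  | botL b Γ Δ => simp only [flatL_cons, fmA_fm]; exact .botL _ _ _
  | botR _ ih => simp only [flatR_cons, fmS_fm]; exact .botR ih
  | andL _ ih => simp only [flatL_cons, fmA_fm] at ih ⊢; exact .andL ih
  | andR _ _ ih1 ih2 =>
    simp only [flatR_cons, fmS_fm] at ih1 ih2 ⊢; exact .andR ih1 ih2
  | orL _ _ ih1 ih2 =>
    simp only [flatL_cons, fmA_fm] at ih1 ih2 ⊢; exact .orL ih1 ih2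
  | orR _ ih => simp only [flatR_cons, fmS_fm] at ih ⊢; exact .orR ih
  | impL _ _ ih1 ih2 =>
    simp only [flatL_cons, flatR_cons, fmA_fm, fmS_fm] at ih1 ih2 ⊢; exact .impL ih1 ih2
  | impR _ ih =>
    simp only [flatL_cons, flatR_cons, flatR_nil, fmA_fm, fmS_fm] at ih ⊢; exact .impR ih
  | exclL _ ih =>
    simp only [flatL_cons, flatL_nil, flatR_cons, fmA_fm, fmS_fm] at ih ⊢; exact .exclL ih
  | exclR _ _ ih1 ih2 =>
    simp only [flatL_cons, flatR_cons, fmA_fm, fmS_fm] at ih1 ih2 ⊢; exact .exclR ih1 ih2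
  | @nestL b Γ Δ Γ₀ Δ₀ _ ih =>
    simp only [flatL_cons, flatR_append, fmA_seq] at ih ⊢
    apply ND.exclL
    apply disjR_fm
    apply conjL_fm (Ξ := [])
    exact nd_permL (by simp) ih
  | @nestR b Γ Δ Γ₀ Δ₀ _ ih =>
    simp only [flatR_cons, flatL_append, fmS_seq] at ih ⊢
    apply ND.impR
    apply conjL_fm
    apply disjR_fm Δ₀ (Θ := [])
    exact nd_perm List.perm_append_comm (by simp) ih
  | @unnestL b Γ Δ Γ₀ Δ₀ _ ih =>
    simp only [flatL_cons, flatL_append, flatR_append, fmA_seq] at ih ⊢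
    refine ND.cut (.excl (conjC Γ₀) (disjC Δ₀)) ?_ ?_
    · apply ND.exclR
      · exact conjRflat Γ₀ true (flatL Γ) (flatR Δ₀ ++ flatR Δ)
      · exact nd_permR List.perm_middle
          (disjLflat Δ₀ true (flatL Γ₀ ++ flatL Γ) (.fm (.excl (conjC Γ₀) (disjC Δ₀)) :: flatR Δ))
    · exact nd_permL List.perm_middle (weakNLs (flatL Γ₀) (weakNRs (flatR Δ₀) ih))
  | @unnestR b Γ Δ Γ₀ Δ₀ _ ih =>
    simp only [flatR_cons, flatL_append, flatR_append, fmS_seq] at ih ⊢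
    refine ND.cut (.imp (conjC Γ₀) (disjC Δ₀)) ?_ ?_
    · exact nd_permR List.perm_middle (weakNRs (flatR Δ₀) (weakNLs (flatL Γ₀) ih))
    · apply ND.impL
      · exact nd_permL List.perm_middle
          (conjRflat Γ₀ true (.fm (.imp (conjC Γ₀) (disjC Δ₀)) :: flatL Γ) (flatR Δ₀ ++ flatR Δ))
      · exact disjLflat Δ₀ true (flatL Γ₀ ++ flatL Γ) (flatR Δ)

end Aux
namespace Aux

theorem unflattenL1 {N Ξ Θ} (h : ND true (.fm (fmA N) :: Ξ) Θ) : ND true (N :: Ξ) Θ :=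
  .cut (fmA N) (idA N true Ξ Θ) (nd_permL (pswap _ _ _) (weakNL N h))

theorem unflattenR1 {N Ξ Θ} (h : ND true Ξ (.fm (fmS N) :: Θ)) : ND true Ξ (N :: Θ) :=
  .cut (fmS N) (nd_permR (pswap _ _ _) (weakNR N h)) (idS N true Ξ Θ)

theorem unflattenLs : ∀ (L : List NForm) {Ξ Θ}, ND true (flatL L ++ Ξ) Θ → ND true (L ++ Ξ) Θ
  | [], Ξ, Θ, h => h
  | N :: L, Ξ, Θ, h => by
    have h1 : ND true (N :: (flatL L ++ Ξ)) Θ := unflattenL1 h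
    have h2 : ND true (flatL L ++ (N :: Ξ)) Θ := nd_permL List.perm_middle.symm h1
    exact nd_permL List.perm_middle (unflattenLs L h2)

theorem unflattenRs : ∀ (P : List NForm) {Ξ Θ}, ND true Ξ (flatR P ++ Θ) → ND true Ξ (P ++ Θ)
  | [], Ξ, Θ, h => h
  | N :: P, Ξ, Θ, h => by
    have h1 : ND true Ξ (N :: (flatR P ++ Θ)) := unflattenR1 h
    have h2 : ND true Ξ (flatR P ++ (N :: Θ)) := nd_permR List.perm_middle.symm h1
    exact nd_permR List.perm_middle (unflattenRs P h2)

/-- one-step readdressing: move the root along an out-arc -/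
theorem step1 {L P L0 Q : List NForm} (h : ND true L (.seq L0 Q :: P)) :
    ND true (.seq L P :: L0) Q := by
  have f : ND true (flatL L) (.fm (.imp (conjC L0) (disjC Q)) :: flatR P) := by
    have := flat h
    simpa using this
  have u1 : ND true L (.fm (.imp (conjC L0) (disjC Q)) :: flatR P) := by
    have := unflattenLs L (Ξ := []) (nd_permL (by simp) f)
    exact nd_permL (by simp) this
  have u2 : ND true L (P ++ [.fm (.imp (conjC L0) (disjC Q))]) :=
    unflattenRs P (nd_permR (perm_cons_append _ _) u1)
  refine ND.cut (.imp (conjC L0) (disjC Q)) ?_ ?_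
  · apply ND.nestL
    have w : ND true L (Q ++ (P ++ [.fm (.imp (conjC L0) (disjC Q))])) := weakNRs Q u2
    exact nd_permR (List.perm_append_comm.trans (by simp)) w
  · apply ND.impL
    · exact nd_permL (List.perm_append_comm.trans (by simp))
        (conjR L0 true [.fm (.imp (conjC L0) (disjC Q)), .seq L P] Q)
    · exact nd_permR (by simp) (disjL Q true (.seq L P :: L0) [])

/-- one-step readdressing: move the root along an in-arc -/
theorem step2 {L P L0 Q : List NForm} (h : ND true (.seq L P :: L0) Q) :
    ND true L (.seq L0 Q :: P) := by
  have f : ND true (.fm (.excl (conjC L) (disjC P)) :: flatL L0) (flatR Q) := by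
    have := flat h
    simpa using this
  have u1 : ND true (L0 ++ [.fm (.excl (conjC L) (disjC P))]) (flatR Q) :=
    unflattenLs L0 (nd_permL (perm_cons_append _ _) f)
  have u2 : ND true (.fm (.excl (conjC L) (disjC P)) :: L0) Q := by
    have := unflattenRs Q (Θ := []) (nd_permR (by simp) u1)
    exact nd_perm (perm_cons_append _ _).symm (by simp) this
  refine ND.cut (.excl (conjC L) (disjC P)) ?_ ?_
  · apply ND.exclR
    · exact nd_permL (by simp) (conjR L true [] (.seq L0 Q :: P))
    · exact nd_permR (List.perm_append_comm.trans (by simp))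
        (disjL P true L [.fm (.excl (conjC L) (disjC P)), .seq L0 Q])
  · apply ND.nestR
    show ND true (.fm (.excl (conjC L) (disjC P)) :: (L ++ L0)) Q
    exact nd_permL List.perm_middle (weakNLs L u2)

end Aux
namespace Aux

theorem mem_comp {G : LGraph} {x y z : ℕ} :
    z ∈ G.comp x y ↔ z ∈ G.nodes ∧ z ≠ x ∧ G.ReachAvoiding x y z := by
  letI : DecidablePred (G.ReachAvoiding x y) := Classical.decPred _
  unfold LGraph.comp
  simp only [Finset.mem_filter, Finset.mem_erase]
  tauto

theorem adj_symm {G : LGraph} {a b : ℕ} (h : G.Adj a b) : G.Adj b a := h.elim .inr .inl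

theorem adj_mem {G : LGraph} (hG : IsTree G) {a b : ℕ} (h : G.Adj a b) :
    a ∈ G.nodes ∧ b ∈ G.nodes := by
  rcases h with h | h
  · exact hG.arcs_mem _ h
  · exact (hG.arcs_mem _ h).symm

theorem adj_ne {G : LGraph} (hG : IsTree G) {a b : ℕ} (h : G.Adj a b) : a ≠ b := by
  rintro rfl
  rcases h with h | h <;> exact hG.no_loop _ h

/-- extract a chain list from reflexive-transitive closure -/
theorem reach_to_list {α : Type} {R : α → α → Prop} {a b : α}
    (h : Relation.ReflTransGen R a b) :
    ∃ l : List α, l.Chain' R ∧ l.head? = some a ∧ l.getLast? = some b := by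
  induction h with
  | refl => exact ⟨[a], List.isChain_singleton a, rfl, rfl⟩
  | @tail b c hab hbc ih =>
    obtain ⟨l, hc, hh, hl⟩ := ih
    refine ⟨l ++ [c], ?_, ?_, by simp⟩
    · refine List.IsChain.append hc (by simp) ?_
      intro u hu v hv
      simp at hv
      subst hv
      rw [hl] at hu
      cases hu
      exact hbc
    · cases l with
      | nil => simp at hh
      | cons d l => simpa using hh

/-- remove duplicates from a chain, keeping endpoints -/
theorem chain_dedup {α : Type} {R : α → α → Prop} :
    ∀ (l : List α), l.Chain' R →
      ∃ l' : List α, l'.Chain' R ∧ l'.head? = l.head? ∧ l'.getLast? = l.getLast? ∧ l'.Nodup ∧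
        ∀ z ∈ l', z ∈ l := by
  intro l
  generalize hn : l.length = n
  induction n using Nat.strong_induction_on generalizing l with
  | _ n ih =>
  intro hc
  by_cases hd : l.Nodup
  · exact ⟨l, hc, rfl, rfl, hd, fun z hz => hz⟩
  · -- find a duplicate
    subst hn
    cases l with
    | nil => simp at hd
    | cons b t =>
      by_cases hb : b ∈ t
      · obtain ⟨t₁, t₂, rfl⟩ := List.append_of_mem hb
        have hsuf : (b :: t₂) <:+ (b :: (t₁ ++ b :: t₂)) := by
          refine ⟨b :: t₁, by simp⟩
        have hc' : (b :: t₂).Chain' R := hc.suffix hsuf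
        have hlen : (b :: t₂).length < (b :: (t₁ ++ b :: t₂)).length := by
          simp
        obtain ⟨l', h1, h2, h3, h4, h5⟩ := ih _ hlen _ rfl hc'
        refine ⟨l', h1, ?_, ?_, h4, ?_⟩
        · rw [h2]; rfl
        · rw [h3]
          show (b :: t₂).getLast? = ((b :: t₁) ++ (b :: t₂)).getLast?
          rw [List.getLast?_append_of_ne_nil _ (by simp)]
        · intro z hz
          have := h5 z hz
          simp at this ⊢
          tauto
      · have hdt : ¬ t.Nodup := by
          intro h
          exact hd (List.nodup_cons.mpr ⟨hb, h⟩)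
        have hct : t.Chain' R := hc.tail
        have hlen : t.length < (b :: t).length := by simp
        obtain ⟨l', h1, h2, h3, h4, h5⟩ := ih _ hlen _ rfl hct
        cases t with
        | nil => simp at hdt
        | cons c t =>
          cases l' with
          | nil => simp at h2
          | cons c' l' =>
            refine ⟨b :: c' :: l', ?_, by simp, ?_, ?_, ?_⟩
            · refine List.isChain_cons_cons.mpr ⟨?_, h1⟩
              have hbc : R b c := (List.isChain_cons_cons.mp hc).1
              have hcc : c' = c := by simpa using h2
              rw [hcc]; exact hbc
            · rw [List.getLast?_cons_cons, List.getLast?_cons_cons, h3]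
            · refine List.nodup_cons.mpr ⟨?_, h4⟩
              intro hmem
              exact hb (h5 _ hmem)
            · intro z hz
              rcases List.mem_cons.mp hz with rfl | hz
              · simp
              · exact List.mem_cons_of_mem _ (h5 _ hz)

theorem chain_mem_nodes {G : LGraph} (hG : IsTree G) :
    ∀ (l : List ℕ), l.Chain' G.Adj → (∀ w, l.head? = some w → w ∈ G.nodes) →
      ∀ z ∈ l, z ∈ G.nodes := by
  intro l
  induction l with
  | nil => intro _ _ z hz; simp at hz
  | cons a t ih =>
    intro hc hh z hz
    rcases List.mem_cons.mp hz with rfl | hz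
    · exact hh z rfl
    · cases t with
      | nil => simp at hz
      | cons c t =>
        refine ih hc.tail ?_ z hz
        intro w hw
        simp at hw
        subst hw
        exact (adj_mem hG (List.isChain_cons_cons.mp hc).1).2
end Aux
namespace Aux

theorem chain_all {α : Type} {R : α → α → Prop} {P : α → Prop} :
    ∀ l : List α, l.Chain' R → (∀ w, l.head? = some w → P w) → (∀ u v, R u v → P v) →
      ∀ z ∈ l, P z := by
  intro l
  induction l with
  | nil => intro _ _ _ z hz; simp at hz
  | cons a t ih =>
    intro hc hh hstep z hz
    rcases List.mem_cons.mp hz with rfl | hz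
    · exact hh z rfl
    · cases t with
      | nil => simp at hz
      | cons c t =>
        refine ih hc.tail ?_ hstep z hz
        intro w hw
        simp at hw
        subst hw
        exact hstep _ _ (List.isChain_cons_cons.mp hc).1

theorem no_cycle {G : LGraph} (hG : IsTree G) {a b w : ℕ} (hab : G.Adj a b) (hbw : G.Adj b w)
    (hwa : w ≠ a) (hreach : G.ReachAvoiding b w a) : False := by
  have hba : b ≠ a := (adj_ne hG hab).symm
  have hP1 : IsPath G b a [b, a] := by
    refine ⟨?_, rfl, rfl, ?_, ?_⟩
    · exact List.isChain_cons_cons.mpr ⟨adj_symm hab, List.isChain_singleton a⟩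
    · simp [hba]
    · intro z hz
      rcases List.mem_cons.mp hz with rfl | hz
      · exact (adj_mem hG hab).2
      · simp at hz
        subst hz
        exact (adj_mem hG hab).1
  obtain ⟨l, hc, hh, hl⟩ := reach_to_list hreach
  obtain ⟨l', hc', hh', hl', hnd', hsub⟩ := chain_dedup l hc
  rw [hh] at hh'
  rw [hl] at hl'
  have hallne : ∀ z ∈ l, z ≠ b := by
    refine chain_all l hc ?_ ?_
    · intro u hu
      rw [hh] at hu
      cases hu
      exact (adj_ne hG hbw).symm
    · intro u v hr
      exact hr.2.2
  have hallmem : ∀ z ∈ l, z ∈ G.nodes := by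
    refine chain_all l hc ?_ ?_
    · intro u hu
      rw [hh] at hu
      cases hu
      exact (adj_mem hG hbw).2
    · intro u v hr
      exact (adj_mem hG hr.1).2
  have hP2 : IsPath G b a (b :: l') := by
    refine ⟨?_, rfl, ?_, ?_, ?_⟩
    · refine List.isChain_cons.mpr ⟨?_, hc'.imp (fun _ _ h => h.1)⟩
      intro y hy
      rw [hh'] at hy
      cases hy
      exact hbw
    · cases l' with
      | nil => simp at hh'
      | cons c t => rw [List.getLast?_cons_cons]; exact hl'
    · refine List.nodup_cons.mpr ⟨?_, hnd'⟩
      intro hmem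
      exact hallne b (hsub b hmem) rfl
    · intro z hz
      rcases List.mem_cons.mp hz with rfl | hz
      · exact (adj_mem hG hab).2
      · exact hallmem z (hsub z hz)
  obtain ⟨p, -, hup⟩ := hG.unique_path b (adj_mem hG hab).2 a (adj_mem hG hab).1
  have e := (hup _ hP2).trans (hup _ hP1).symm
  cases l' with
  | nil => simp at hh'
  | cons c t =>
    have e2 : c = a ∧ t = [] := by simpa using e
    have hcw : c = w := by simpa using hh'
    exact hwa (by rw [← hcw]; exact e2.1)

theorem reach_mem_comp {G : LGraph} (hG : IsTree G) {a b w : ℕ} (hab : G.Adj a b)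
    (hbw : G.Adj b w) (hwa : w ≠ a) : ∀ z, G.ReachAvoiding b w z → z ∈ G.comp a b := by
  intro z h
  induction h with
  | refl =>
    exact mem_comp.mpr ⟨(adj_mem hG hbw).2, hwa,
      Relation.ReflTransGen.single ⟨hbw, (adj_ne hG hab).symm, hwa⟩⟩
  | @tail u v hwu huv ih =>
    have hu := mem_comp.mp ih
    have hva : v ≠ a := by
      rintro rfl
      exact no_cycle hG hab hbw hwa (hwu.tail huv)
    exact mem_comp.mpr ⟨(adj_mem hG huv.1).2, hva, hu.2.2.tail ⟨huv.1, hu.2.1, hva⟩⟩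

theorem comp_subset_comp {G : LGraph} (hG : IsTree G) {a b w : ℕ} (hab : G.Adj a b)
    (hbw : G.Adj b w) (hwa : w ≠ a) : G.comp b w ⊆ G.comp a b := fun _ hz =>
  reach_mem_comp hG hab hbw hwa _ (mem_comp.mp hz).2.2

theorem comp_subset_nodes (G : LGraph) (x y : ℕ) : G.comp x y ⊆ G.nodes := fun z hz =>
  (mem_comp.mp hz).1

theorem reach_induce_mono {G : LGraph} {s : Finset ℕ} {b w z : ℕ}
    (h : (G.induce s).ReachAvoiding b w z) : G.ReachAvoiding b w z := by
  induction h with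
  | refl => exact .refl
  | tail _ huv ih =>
    refine ih.tail ⟨?_, huv.2.1, huv.2.2⟩
    rcases huv.1 with h | h
    · exact Or.inl (Finset.mem_filter.mp h).1
    · exact Or.inr (Finset.mem_filter.mp h).1

theorem induce_comp_eq {G : LGraph} (hG : IsTree G) {a b w : ℕ} (hab : G.Adj a b)
    (hbw : G.Adj b w) (hwa : w ≠ a) : (G.induce (G.comp a b)).comp b w = G.comp b w := by
  ext z
  constructor
  · intro hz
    obtain ⟨h1, h2, h3⟩ := mem_comp.mp hz
    exact mem_comp.mpr ⟨comp_subset_nodes _ _ _ h1, h2, reach_induce_mono h3⟩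
  · intro hz
    obtain ⟨h1, h2, h3⟩ := mem_comp.mp hz
    refine mem_comp.mpr ⟨?_, h2, ?_⟩
    · exact reach_mem_comp hG hab hbw hwa z h3
    · -- reach inside the induced graph
      clear h1 h2 hz
      induction h3 with
      | refl => exact .refl
      | @tail u v hwu huv ih =>
        have hu : u ∈ G.comp a b := reach_mem_comp hG hab hbw hwa u hwu
        have hv : v ∈ G.comp a b := reach_mem_comp hG hab hbw hwa v (hwu.tail huv)
        refine ih.tail ⟨?_, huv.2.1, huv.2.2⟩
        rcases huv.1 with h | h
        · exact Or.inl (Finset.mem_filter.mpr ⟨h, hu, hv⟩)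
        · exact Or.inr (Finset.mem_filter.mpr ⟨h, hv, hu⟩)

theorem induce_induce (G : LGraph) {s t : Finset ℕ} (h : t ⊆ s) :
    (G.induce s).induce t = G.induce t := by
  unfold LGraph.induce
  congr 1
  ext p
  simp only [Finset.mem_filter]
  constructor
  · rintro ⟨⟨h1, -, -⟩, h2, h3⟩
    exact ⟨h1, h2, h3⟩
  · rintro ⟨h1, h2, h3⟩
    exact ⟨⟨h1, h h2, h h3⟩, h2, h3⟩

theorem filter_filter_sub (Γ : LCtx) {s t : Finset ℕ} (h : t ⊆ s) :
    (Γ.filter (fun p => p.1 ∈ s)).filter (fun p => p.1 ∈ t) = Γ.filter (fun p => p.1 ∈ t) := by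
  rw [Multiset.filter_filter]
  refine Multiset.filter_congr ?_
  intro p _
  constructor
  · rintro ⟨h1, -⟩; exact h1
  · intro h1; exact ⟨h1, h h1⟩

theorem filter_eq_sub (Γ : LCtx) {s : Finset ℕ} {x : ℕ} (h : x ∈ s) :
    (Γ.filter (fun p => p.1 ∈ s)).filter (fun p => p.1 = x) = Γ.filter (fun p => p.1 = x) := by
  rw [Multiset.filter_filter]
  refine Multiset.filter_congr ?_
  intro p _
  constructor
  · rintro ⟨h1, -⟩; exact h1
  · intro h1; exact ⟨h1, by rw [h1]; exact h⟩

end Aux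
namespace Aux

noncomputable def ntrm (G : LGraph) (Γ Δ : LCtx) (x : ℕ) (w : ℕ) : NForm :=
  NForm.seq
    (ntr (G.induce (G.comp x w)) (Γ.filter (fun p => p.1 ∈ G.comp x w))
      (Δ.filter (fun p => p.1 ∈ G.comp x w)) w).1
    (ntr (G.induce (G.comp x w)) (Γ.filter (fun p => p.1 ∈ G.comp x w))
      (Δ.filter (fun p => p.1 ∈ G.comp x w)) w).2

theorem attach_map_val' {α β : Type} (l : List α) (f : α → β) (g : {x // x ∈ l} → β)
    (h : ∀ a, g a = f a.1) : l.attach.map g = l.map f := by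
  rw [← List.attach_map_val (l := l) (f := f)]
  exact List.map_congr_left (fun a _ => h a)

theorem ntr_eq (G : LGraph) (Γ Δ : LCtx) (x : ℕ) (hx : x ∈ G.nodes) :
    ntr G Γ Δ x =
      ((Γ.filter (fun a => a.1 = x)).toList.map (fun a => NForm.fm a.2) ++
         (G.arcs.filter (fun a => a.2 = x)).toList.map (fun a => ntrm G Γ Δ x a.1),
       (Δ.filter (fun a => a.1 = x)).toList.map (fun a => NForm.fm a.2) ++
         (G.arcs.filter (fun a => a.1 = x)).toList.map (fun a => ntrm G Γ Δ x a.2)) := by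
  rw [ntr]
  simp only [hx, dite_true]
  refine Prod.ext ?_ ?_
  · simp only []
    refine congrArg _ ?_
    exact attach_map_val' _ (fun (a : ℕ × ℕ) => ntrm G Γ Δ x a.1) _ (fun a => rfl)
  · simp only []
    refine congrArg _ ?_
    exact attach_map_val' _ (fun (a : ℕ × ℕ) => ntrm G Γ Δ x a.2) _ (fun a => rfl)

end Aux
namespace Aux

theorem ntrm_induce {G : LGraph} (hG : IsTree G) {y x w : ℕ} (hab : G.Adj y x)
    (hbw : G.Adj x w) (hw : w ≠ y) (Γ Δ : LCtx) :
    ntrm (G.induce (G.comp y x)) (Γ.filter (fun p => p.1 ∈ G.comp y x))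
      (Δ.filter (fun p => p.1 ∈ G.comp y x)) x w = ntrm G Γ Δ x w := by
  have hsub := comp_subset_comp hG hab hbw hw
  unfold ntrm
  rw [induce_comp_eq hG hab hbw hw, induce_induce G hsub, filter_filter_sub Γ hsub,
    filter_filter_sub Δ hsub]

theorem not_mem_comp_self (G : LGraph) (a b : ℕ) : a ∉ G.comp a b :=
  fun h => (mem_comp.mp h).2.1 rfl

section ArcFacts

variable {G : LGraph} (hG : IsTree G) {x y : ℕ} (harc : (x, y) ∈ G.arcs)
include hG harc

theorem arc_ne : x ≠ y := fun h => hG.no_loop y (h ▸ harc)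

theorem x_mem_comp : x ∈ G.comp y x :=
  mem_comp.mpr ⟨(hG.arcs_mem _ harc).1, arc_ne hG harc, .refl⟩

theorem y_mem_comp : y ∈ G.comp x y :=
  mem_comp.mpr ⟨(hG.arcs_mem _ harc).2, (arc_ne hG harc).symm, .refl⟩

theorem arcs_in_x : (G.induce (G.comp y x)).arcs.filter (fun p => p.2 = x) =
    G.arcs.filter (fun p => p.2 = x) := by
  ext p
  simp only [LGraph.induce, Finset.mem_filter]
  constructor
  · rintro ⟨⟨h1, -, -⟩, h2⟩
    exact ⟨h1, h2⟩
  · rintro ⟨h1, h2⟩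
    have hpm : (p.1, x) ∈ G.arcs := by rw [← h2]; exact h1
    have hbw : G.Adj x p.1 := Or.inr hpm
    have hw : p.1 ≠ y := fun h => hG.no_double x y harc (h ▸ hpm)
    refine ⟨⟨h1, reach_mem_comp hG (Or.inr harc) hbw hw p.1 .refl, ?_⟩, h2⟩
    rw [h2]
    exact x_mem_comp hG harc

theorem arcs_out_x : G.arcs.filter (fun p => p.1 = x) =
    insert (x, y) ((G.induce (G.comp y x)).arcs.filter (fun p => p.1 = x)) := by
  ext p
  simp only [LGraph.induce, Finset.mem_filter, Finset.mem_insert]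
  constructor
  · rintro ⟨h1, h2⟩
    by_cases hpy : p.2 = y
    · left
      rw [← h2, ← hpy]
    · right
      have hpm : (x, p.2) ∈ G.arcs := by rw [← h2]; exact h1
      have hbw : G.Adj x p.2 := Or.inl hpm
      refine ⟨⟨h1, ?_, reach_mem_comp hG (Or.inr harc) hbw hpy p.2 .refl⟩, h2⟩
      rw [h2]
      exact x_mem_comp hG harc
  · rintro (rfl | ⟨⟨h1, -, -⟩, h2⟩)
    · exact ⟨harc, rfl⟩
    · exact ⟨h1, h2⟩

theorem arcs_out_x_not :
    (x, y) ∉ (G.induce (G.comp y x)).arcs.filter (fun p => p.1 = x) := by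
  intro h
  have := (Finset.mem_filter.mp h).1
  simp only [LGraph.induce, Finset.mem_filter] at this
  exact not_mem_comp_self G y x this.2.2

theorem arcs_out_y : (G.induce (G.comp x y)).arcs.filter (fun p => p.1 = y) =
    G.arcs.filter (fun p => p.1 = y) := by
  ext p
  simp only [LGraph.induce, Finset.mem_filter]
  constructor
  · rintro ⟨⟨h1, -, -⟩, h2⟩
    exact ⟨h1, h2⟩
  · rintro ⟨h1, h2⟩
    have hpm : (y, p.2) ∈ G.arcs := by rw [← h2]; exact h1
    have hbw : G.Adj y p.2 := Or.inl hpm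
    have hw : p.2 ≠ x := fun h => hG.no_double x y harc (h ▸ hpm)
    refine ⟨⟨h1, ?_, reach_mem_comp hG (Or.inl harc) hbw hw p.2 .refl⟩, h2⟩
    rw [h2]
    exact y_mem_comp hG harc

theorem arcs_in_y : G.arcs.filter (fun p => p.2 = y) =
    insert (x, y) ((G.induce (G.comp x y)).arcs.filter (fun p => p.2 = y)) := by
  ext p
  simp only [LGraph.induce, Finset.mem_filter, Finset.mem_insert]
  constructor
  · rintro ⟨h1, h2⟩
    by_cases hpx : p.1 = x
    · left
      rw [← h2, ← hpx]
    · right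
      have hpm : (p.1, y) ∈ G.arcs := by rw [← h2]; exact h1
      have hbw : G.Adj y p.1 := Or.inr hpm
      refine ⟨⟨h1, reach_mem_comp hG (Or.inl harc) hbw hpx p.1 .refl, ?_⟩, h2⟩
      rw [h2]
      exact y_mem_comp hG harc
  · rintro (rfl | ⟨⟨h1, -, -⟩, h2⟩)
    · exact ⟨harc, rfl⟩
    · exact ⟨h1, h2⟩

theorem arcs_in_y_not :
    (x, y) ∉ (G.induce (G.comp x y)).arcs.filter (fun p => p.2 = y) := by
  intro h
  have := (Finset.mem_filter.mp h).1
  simp only [LGraph.induce, Finset.mem_filter] at this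
  exact not_mem_comp_self G x y this.2.1

end ArcFacts

end Aux
namespace Aux

theorem decompL {G : LGraph} (hG : IsTree G) {x y : ℕ} (harc : (x, y) ∈ G.arcs) (Γ Δ : LCtx) :
    ((ntr G Γ Δ x).1).Perm
      ((ntr (G.induce (G.comp y x)) (Γ.filter (fun p => p.1 ∈ G.comp y x))
        (Δ.filter (fun p => p.1 ∈ G.comp y x)) x).1) ∧
    ((ntr G Γ Δ x).2).Perm
      (ntrm G Γ Δ x y ::
        (ntr (G.induce (G.comp y x)) (Γ.filter (fun p => p.1 ∈ G.comp y x))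
          (Δ.filter (fun p => p.1 ∈ G.comp y x)) x).2) := by
  have hxn : x ∈ G.nodes := (hG.arcs_mem _ harc).1
  have hxs : x ∈ G.comp y x := x_mem_comp hG harc
  rw [ntr_eq G Γ Δ x hxn,
    ntr_eq (G.induce (G.comp y x)) (Γ.filter (fun p => p.1 ∈ G.comp y x))
      (Δ.filter (fun p => p.1 ∈ G.comp y x)) x hxs]
  dsimp only
  constructor
  · apply List.Perm.of_eq
    congr 1
    · rw [filter_eq_sub Γ hxs]
    · rw [arcs_in_x hG harc]
      apply List.map_congr_left
      intro a ha
      obtain ⟨h1, h2⟩ := Finset.mem_filter.mp (Finset.mem_toList.mp ha)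
      have hpm : (a.1, x) ∈ G.arcs := by rw [← h2]; exact h1
      exact (ntrm_induce hG (Or.inr harc) (Or.inr hpm)
        (fun h => hG.no_double x y harc (h ▸ hpm)) Γ Δ).symm
  · rw [filter_eq_sub Δ hxs]
    have e2 : ((G.induce (G.comp y x)).arcs.filter (fun p => p.1 = x)).toList.map
        (fun a => ntrm (G.induce (G.comp y x)) (Γ.filter (fun p => p.1 ∈ G.comp y x))
          (Δ.filter (fun p => p.1 ∈ G.comp y x)) x a.2) =
        ((G.induce (G.comp y x)).arcs.filter (fun p => p.1 = x)).toList.map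
          (fun a => ntrm G Γ Δ x a.2) := by
      apply List.map_congr_left
      intro a ha
      obtain ⟨h1, h2⟩ := Finset.mem_filter.mp (Finset.mem_toList.mp ha)
      have h1' := Finset.mem_filter.mp h1
      have ha2s : a.2 ∈ G.comp y x := h1'.2.2
      have hpm : (x, a.2) ∈ G.arcs := by rw [← h2]; exact h1'.1
      have hw : a.2 ≠ y := fun h => not_mem_comp_self G y x (h ▸ ha2s)
      exact ntrm_induce hG (Or.inr harc) (Or.inl hpm) hw Γ Δ
    rw [e2]
    have hperm := (Finset.toList_insert (arcs_out_x_not hG harc)).map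
      (fun (a : ℕ × ℕ) => ntrm G Γ Δ x a.2)
    rw [← arcs_out_x hG harc] at hperm
    simp only [List.map_cons] at hperm
    exact (List.Perm.append_left _ hperm).trans List.perm_middle

theorem decompR {G : LGraph} (hG : IsTree G) {x y : ℕ} (harc : (x, y) ∈ G.arcs) (Γ Δ : LCtx) :
    ((ntr G Γ Δ y).1).Perm
      (ntrm G Γ Δ y x ::
        (ntr (G.induce (G.comp x y)) (Γ.filter (fun p => p.1 ∈ G.comp x y))
          (Δ.filter (fun p => p.1 ∈ G.comp x y)) y).1) ∧
    ((ntr G Γ Δ y).2).Perm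
      ((ntr (G.induce (G.comp x y)) (Γ.filter (fun p => p.1 ∈ G.comp x y))
        (Δ.filter (fun p => p.1 ∈ G.comp x y)) y).2) := by
  have hyn : y ∈ G.nodes := (hG.arcs_mem _ harc).2
  have hyt : y ∈ G.comp x y := y_mem_comp hG harc
  rw [ntr_eq G Γ Δ y hyn,
    ntr_eq (G.induce (G.comp x y)) (Γ.filter (fun p => p.1 ∈ G.comp x y))
      (Δ.filter (fun p => p.1 ∈ G.comp x y)) y hyt]
  dsimp only
  constructor
  · rw [filter_eq_sub Γ hyt]
    have e2 : ((G.induce (G.comp x y)).arcs.filter (fun p => p.2 = y)).toList.map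
        (fun a => ntrm (G.induce (G.comp x y)) (Γ.filter (fun p => p.1 ∈ G.comp x y))
          (Δ.filter (fun p => p.1 ∈ G.comp x y)) y a.1) =
        ((G.induce (G.comp x y)).arcs.filter (fun p => p.2 = y)).toList.map
          (fun a => ntrm G Γ Δ y a.1) := by
      apply List.map_congr_left
      intro a ha
      obtain ⟨h1, h2⟩ := Finset.mem_filter.mp (Finset.mem_toList.mp ha)
      have h1' := Finset.mem_filter.mp h1
      have ha1t : a.1 ∈ G.comp x y := h1'.2.1
      have hpm : (a.1, y) ∈ G.arcs := by rw [← h2]; exact h1'.1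
      have hw : a.1 ≠ x := fun h => not_mem_comp_self G x y (h ▸ ha1t)
      exact ntrm_induce hG (Or.inl harc) (Or.inr hpm) hw Γ Δ
    rw [e2]
    have hperm := (Finset.toList_insert (arcs_in_y_not hG harc)).map
      (fun (a : ℕ × ℕ) => ntrm G Γ Δ y a.1)
    rw [← arcs_in_y hG harc] at hperm
    simp only [List.map_cons] at hperm
    exact (List.Perm.append_left _ hperm).trans List.perm_middle
  · apply List.Perm.of_eq
    congr 1
    · rw [filter_eq_sub Δ hyt]
    · rw [arcs_out_y hG harc]
      apply List.map_congr_left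
      intro a ha
      obtain ⟨h1, h2⟩ := Finset.mem_filter.mp (Finset.mem_toList.mp ha)
      have hpm : (y, a.2) ∈ G.arcs := by rw [← h2]; exact h1
      exact (ntrm_induce hG (Or.inl harc) (Or.inl hpm)
        (fun h => hG.no_double x y harc (h ▸ hpm)) Γ Δ).symm

theorem move_arc {G : LGraph} (hG : IsTree G) {x y : ℕ} (harc : (x, y) ∈ G.arcs) (Γ Δ : LCtx) :
    (ND true (ntr G Γ Δ x).1 (ntr G Γ Δ x).2 → ND true (ntr G Γ Δ y).1 (ntr G Γ Δ y).2) ∧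
    (ND true (ntr G Γ Δ y).1 (ntr G Γ Δ y).2 → ND true (ntr G Γ Δ x).1 (ntr G Γ Δ x).2) := by
  obtain ⟨pL1, pL2⟩ := decompL hG harc Γ Δ
  obtain ⟨pR1, pR2⟩ := decompR hG harc Γ Δ
  constructor
  · intro h
    have h1 := nd_perm pL1 pL2 h
    have h2 := step1 h1
    exact nd_perm pR1.symm pR2.symm h2
  · intro h
    have h1 := nd_perm pR1 pR2 h
    have h2 := step2 h1
    exact nd_perm pL1.symm pL2.symm h2

theorem move_adj {G : LGraph} (hG : IsTree G) {u v : ℕ} (h : G.Adj u v) (Γ Δ : LCtx)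
    (hd : ND true (ntr G Γ Δ u).1 (ntr G Γ Δ u).2) :
    ND true (ntr G Γ Δ v).1 (ntr G Γ Δ v).2 := by
  rcases h with h | h
  · exact (move_arc hG h Γ Δ).1 hd
  · exact (move_arc hG h Γ Δ).2 hd

theorem move_along {G : LGraph} (hG : IsTree G) (Γ Δ : LCtx) :
    ∀ (l : List ℕ) (z : ℕ), l.Chain' G.Adj → l.head? = some z →
      ∀ x, l.getLast? = some x →
      ND true (ntr G Γ Δ z).1 (ntr G Γ Δ z).2 → ND true (ntr G Γ Δ x).1 (ntr G Γ Δ x).2 := by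
  intro l
  induction l with
  | nil => intro z _ hh; simp at hh
  | cons a t ih =>
    intro z hc hh x hl hd
    have hz : a = z := by simpa using hh
    subst hz
    cases t with
    | nil =>
      have : a = x := by simpa using hl
      subst this
      exact hd
    | cons b t =>
      have hadj : G.Adj a b := (List.isChain_cons_cons.mp hc).1
      have hd' := move_adj hG hadj Γ Δ hd
      refine ih b hc.tail rfl x ?_ hd'
      rw [← hl, List.getLast?_cons_cons]

end Aux

/-- readdressing -/
theorem readdressing (G : LGraph) (hG : IsTree G) (Γ Δ : LCtx)
    (hΓ : ∀ a ∈ Γ, a.1 ∈ G.nodes) (hΔ : ∀ a ∈ Δ, a.1 ∈ G.nodes)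
    (z : ℕ) (hz : z ∈ G.nodes) (x : ℕ) (hx : x ∈ G.nodes)
    (h : ND true (ntr G Γ Δ z).1 (ntr G Γ Δ z).2) :
    ND true (ntr G Γ Δ x).1 (ntr G Γ Δ x).2 := by
  obtain ⟨l, hp, -⟩ := hG.unique_path z hz x hx
  obtain ⟨hchain, hhead, hlast, -, -⟩ := hp
  exact Aux.move_along hG Γ Δ l z hchain hhead x hlast h
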